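/- arXiv:2203.09284 — 3 statements merged into one kernel-verified Lean document; each statement's English description precedes it below -/
import Mathlib

section
/- For the PageRank update map F defined by F(x)_i = (1-d)/n + d * Σ_{j ∈ inlink(i)} x_j / outdeg(j), if every node has outdegree at least 1 and 0 ≤ d < 1, then F is a contraction with Lipschitz constant at most d with respect to the ℓ1 norm on vectors x with nonnegative entries summing to 1. -/
open Finset Filter

/-- In-neighbors of `i`. -/
def inlink {n : ℕ} (E : Fin n → Fin n → Prop) [DecidableRel E] (i : Fin n) : Finset (Fin n) :=
  Finset.univ.filter (fun j => E j i)

/-- Out-degree of `j`. -/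
def outdeg {n : ℕ} (E : Fin n → Fin n → Prop) [DecidableRel E] (j : Fin n) : ℕ :=
  (Finset.univ.filter (fun i => E j i)).card

/-- The Jacobi (power-iteration) PageRank update map. -/
noncomputable def Fpr {n : ℕ} (E : Fin n → Fin n → Prop) [DecidableRel E] (d : ℝ)
    (x : Fin n → ℝ) (i : Fin n) : ℝ :=
  (1 - d) / n + d * ∑ j ∈ inlink E i, x j / (outdeg E j : ℝ)

/-- Right-hand side of the Gauss–Seidel PageRank update at node `i`,
where `g` denotes the already-updated values. -/
noncomputable def gsRHS {n : ℕ} (E : Fin n → Fin n → Prop) [DecidableRel E] (d : ℝ)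
    (g : Fin n → ℝ) (x : Fin n → ℝ) (i : Fin n) : ℝ :=
  (1 - d) / n + d * ((∑ j ∈ (inlink E i).filter (fun j => i ≤ j), x j / (outdeg E j : ℝ)) +
    ∑ j ∈ (inlink E i).filter (fun j => j < i), g j / (outdeg E j : ℝ))

/-- The PageRank map `F` is a `d`-contraction in the ℓ¹ norm on the probability simplex. -/
theorem pagerank_l1_contraction {n : ℕ} (E : Fin n → Fin n → Prop) [DecidableRel E]
    (d : ℝ) (hd0 : 0 ≤ d) (hd1 : d < 1) (hout : ∀ j, 1 ≤ outdeg E j)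
    (x y : Fin n → ℝ) (hx0 : ∀ i, 0 ≤ x i) (hx1 : ∑ i, x i = 1)
    (hy0 : ∀ i, 0 ≤ y i) (hy1 : ∑ i, y i = 1) :
    ∑ i, |Fpr E d x i - Fpr E d y i| ≤ d * ∑ i, |x i - y i| := by
  have key : ∀ i, Fpr E d x i - Fpr E d y i
      = d * ∑ j ∈ inlink E i, (x j - y j) / (outdeg E j : ℝ) := by
    intro i
    simp only [Fpr, sub_div, Finset.sum_sub_distrib]
    ring
  calc ∑ i, |Fpr E d x i - Fpr E d y i|
      ≤ ∑ i, d * ∑ j ∈ inlink E i, |x j - y j| / (outdeg E j : ℝ) := by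
        refine Finset.sum_le_sum fun i _ => ?_
        rw [key, abs_mul, abs_of_nonneg hd0]
        refine mul_le_mul_of_nonneg_left ?_ hd0
        refine (Finset.abs_sum_le_sum_abs _ _).trans ?_
        refine Finset.sum_le_sum fun j _ => ?_
        rw [abs_div, Nat.abs_cast]
    _ = d * ∑ i, ∑ j, if j ∈ inlink E i then |x j - y j| / (outdeg E j : ℝ) else 0 := by
        rw [Finset.mul_sum]
        congr 1; ext i
        rw [Finset.sum_ite_mem, Finset.univ_inter]
    _ = d * ∑ j, (outdeg E j : ℝ) * (|x j - y j| / (outdeg E j : ℝ)) := by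
        rw [Finset.sum_comm]
        congr 1; refine Finset.sum_congr rfl fun j _ => ?_
        simp only [inlink, Finset.mem_filter, Finset.mem_univ, true_and]
        rw [Finset.sum_ite, Finset.sum_const, Finset.sum_const_zero, add_zero, nsmul_eq_mul]
        rfl
    _ = d * ∑ j, |x j - y j| := by
        congr 1; refine Finset.sum_congr rfl fun j _ => ?_
        have h : (outdeg E j : ℝ) ≠ 0 := by
          have := hout j
          positivity
        field_simp
    _ = d * ∑ i, |x i - y i| := rfl
end

section
/- With 0 ≤ d < 1 and every vertex of outdegree at least 1, the PageRank map F has a unique fixed point in the probability simplex. -/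
open Finset Filter

/-!
Since every vertex has an out-edge, the link matrix `(1 / outdeg j)_{j → i}` is column-stochastic.
Hence `F` maps the simplex into itself and is a `d`-contraction for the `ℓ¹` distance (whence
`PiLp 1`: for the sup distance of `Fin n → ℝ` it need not contract), and the Banach fixed point
theorem on the closed simplex gives the unique fixed point.
-/

theorem ContractingWith.existsUnique_isFixedPt_mem {α : Type*} [MetricSpace α] [CompleteSpace α]
    {K : NNReal} {f : α → α} (hf : ContractingWith K f) {s : Set α} (hs : IsClosed s)
    (hs_ne : s.Nonempty) (hfs : Set.MapsTo f s s) :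
    ∃! x, x ∈ s ∧ Function.IsFixedPt f x := by
  obtain ⟨x, hx⟩ := hs_ne
  obtain ⟨y, hys, hy, -⟩ :=
    (hf.restrict hfs).exists_fixedPoint' hs.isComplete hfs hx (edist_ne_top _ _)
  exact ⟨y, ⟨hys, hy⟩, fun z ⟨_, hz⟩ => hf.fixedPoint_unique' hz hy⟩

section PageRank

variable {n : ℕ} (E : Fin n → Fin n → Prop) [DecidableRel E]

theorem sum_sum_inlink_eq_sum_outdeg_mul (g : Fin n → ℝ) :
    ∑ i, ∑ j ∈ inlink E i, g j = ∑ j, (outdeg E j : ℝ) * g j := by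
  simp only [inlink, sum_filter]
  rw [sum_comm]
  refine sum_congr rfl fun j _ => ?_
  rw [← sum_filter, sum_const, outdeg, nsmul_eq_mul]

variable {E}

theorem sum_sum_inlink_div_outdeg (hout : ∀ j, 1 ≤ outdeg E j) (g : Fin n → ℝ) :
    ∑ i, ∑ j ∈ inlink E i, g j / (outdeg E j : ℝ) = ∑ j, g j := by
  rw [sum_sum_inlink_eq_sum_outdeg_mul]
  refine sum_congr rfl fun j _ => ?_
  have hj : (outdeg E j : ℝ) ≠ 0 := by exact_mod_cast Nat.one_le_iff_ne_zero.mp (hout j)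
  field_simp

theorem Fpr_sub_Fpr (d : ℝ) (x y : Fin n → ℝ) (i : Fin n) :
    Fpr E d x i - Fpr E d y i = d * ∑ j ∈ inlink E i, (x j - y j) / (outdeg E j : ℝ) := by
  simp only [Fpr, sub_div, sum_sub_distrib]
  ring

theorem sum_Fpr (hn : 0 < n) (hout : ∀ j, 1 ≤ outdeg E j) (d : ℝ) (x : Fin n → ℝ) :
    ∑ i, Fpr E d x i = (1 - d) + d * ∑ j, x j := by
  have hn' : (n : ℝ) ≠ 0 := by exact_mod_cast hn.ne'
  simp only [Fpr, sum_add_distrib, ← mul_sum, sum_sum_inlink_div_outdeg hout,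
    sum_const, card_univ, Fintype.card_fin, nsmul_eq_mul]
  field_simp

theorem sum_abs_Fpr_sub_le (hout : ∀ j, 1 ≤ outdeg E j) {d : ℝ} (hd0 : 0 ≤ d)
    (x y : Fin n → ℝ) :
    ∑ i, |Fpr E d x i - Fpr E d y i| ≤ d * ∑ j, |x j - y j| := by
  calc ∑ i, |Fpr E d x i - Fpr E d y i|
      ≤ ∑ i, d * ∑ j ∈ inlink E i, |x j - y j| / (outdeg E j : ℝ) := by
        refine sum_le_sum fun i _ => ?_
        rw [Fpr_sub_Fpr, abs_mul, abs_of_nonneg hd0]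
        gcongr
        refine (abs_sum_le_sum_abs _ _).trans_eq (sum_congr rfl fun j _ => ?_)
        rw [abs_div, Nat.abs_cast]
    _ = d * ∑ j, |x j - y j| := by
        rw [← mul_sum, sum_sum_inlink_div_outdeg hout]

theorem Fpr_mapsTo_stdSimplex (hn : 0 < n) (hout : ∀ j, 1 ≤ outdeg E j) {d : ℝ}
    (hd0 : 0 ≤ d) (hd1 : d ≤ 1) :
    Set.MapsTo (Fpr E d) (stdSimplex ℝ (Fin n)) (stdSimplex ℝ (Fin n)) := by
  rintro x ⟨hx0, hx1⟩
  refine ⟨fun i => ?_, by rw [sum_Fpr hn hout, hx1]; ring⟩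
  have h1d : 0 ≤ 1 - d := sub_nonneg.mpr hd1
  exact add_nonneg (by positivity)
    (mul_nonneg hd0 (sum_nonneg fun j _ => div_nonneg (hx0 j) (Nat.cast_nonneg _)))

theorem contractingWith_Fpr_piLp_one (hout : ∀ j, 1 ≤ outdeg E j) {d : ℝ} (hd0 : 0 ≤ d)
    (hd1 : d < 1) :
    ContractingWith ⟨d, hd0⟩ fun x : PiLp 1 (fun _ : Fin n => ℝ) =>
      WithLp.toLp 1 (Fpr E d x.ofLp) := by
  refine ⟨by exact_mod_cast hd1, LipschitzWith.of_dist_le_mul fun x y => ?_⟩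
  simp only [PiLp.dist_eq_of_L1, Real.dist_eq]
  exact sum_abs_Fpr_sub_le hout hd0 x.ofLp y.ofLp

end PageRank

/-- The PageRank map has a unique fixed point in the probability simplex. -/
theorem pagerank_unique_fixed_point {n : ℕ} (hn : 0 < n)
    (E : Fin n → Fin n → Prop) [DecidableRel E]
    (d : ℝ) (hd0 : 0 ≤ d) (hd1 : d < 1) (hout : ∀ j, 1 ≤ outdeg E j) :
    ∃! x : Fin n → ℝ, (∀ i, 0 ≤ x i) ∧ (∑ i, x i = 1) ∧ Fpr E d x = x := by
  set S : Set (PiLp 1 fun _ : Fin n => ℝ) := WithLp.ofLp ⁻¹' stdSimplex ℝ (Fin n)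
  have hclosed : IsClosed S := (isClosed_stdSimplex ℝ (Fin n)).preimage (PiLp.continuous_ofLp 1 _)
  have hne : S.Nonempty := ⟨WithLp.toLp 1 (Pi.single ⟨0, hn⟩ 1), single_mem_stdSimplex ℝ _⟩
  have hmaps : Set.MapsTo (fun x => WithLp.toLp 1 (Fpr E d x.ofLp)) S S :=
    fun _ hx => Fpr_mapsTo_stdSimplex hn hout hd0 hd1.le hx
  obtain ⟨x, ⟨⟨hx0, hx1⟩, hx⟩, huniq⟩ :=
    (contractingWith_Fpr_piLp_one hout hd0 hd1).existsUnique_isFixedPt_mem hclosed hne hmaps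
  refine ⟨x.ofLp, ⟨hx0, hx1, congrArg WithLp.ofLp hx⟩, fun y ⟨hy0, hy1, hy⟩ => ?_⟩
  exact congrArg WithLp.ofLp (huniq (WithLp.toLp 1 y) ⟨⟨hy0, hy1⟩, congrArg (WithLp.toLp 1) hy⟩)
end

section
/- For the Jacobi (power) iteration x^{k+1} = F(x^k) starting from any point x⁰ in the probability simplex, the ℓ1 error to the fixed point x* satisfies ‖x^k − x*‖₁ ≤ d^k ‖x⁰ − x*‖₁; in particular the iteration converges to x*. -/
open Finset Filter

lemma fpr_contract {n : ℕ} (E : Fin n → Fin n → Prop) [DecidableRel E]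
    (d : ℝ) (hd0 : 0 ≤ d) (hout : ∀ j, 1 ≤ outdeg E j) (x y : Fin n → ℝ) :
    ∑ i, |Fpr E d x i - Fpr E d y i| ≤ d * ∑ j, |x j - y j| := by
  have hstep : ∀ i, |Fpr E d x i - Fpr E d y i| ≤
      d * ∑ j ∈ inlink E i, |x j - y j| / (outdeg E j : ℝ) := by
    intro i
    have : Fpr E d x i - Fpr E d y i =
        d * ∑ j ∈ inlink E i, (x j - y j) / (outdeg E j : ℝ) := by
      simp only [Fpr]
      rw [add_sub_add_left_eq_sub, ← mul_sub, ← Finset.sum_sub_distrib]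
      simp only [← sub_div]
    rw [this, abs_mul, abs_of_nonneg hd0]
    gcongr
    refine (Finset.abs_sum_le_sum_abs _ _).trans ?_
    refine Finset.sum_le_sum fun j _ => ?_
    rw [abs_div, Nat.abs_cast]
  calc ∑ i, |Fpr E d x i - Fpr E d y i|
      ≤ ∑ i, d * ∑ j ∈ inlink E i, |x j - y j| / (outdeg E j : ℝ) :=
        Finset.sum_le_sum fun i _ => hstep i
    _ = d * ∑ i, ∑ j ∈ inlink E i, |x j - y j| / (outdeg E j : ℝ) := by
        rw [Finset.mul_sum]
    _ = d * ∑ j, (outdeg E j : ℝ) * (|x j - y j| / (outdeg E j : ℝ)) := by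
        congr 1
        simp only [inlink, Finset.sum_filter]
        rw [Finset.sum_comm]
        refine Finset.sum_congr rfl fun j _ => ?_
        rw [← Finset.sum_filter, Finset.sum_const, outdeg, nsmul_eq_mul]
    _ ≤ d * ∑ j, |x j - y j| := by
        gcongr with j
        have h1 : (outdeg E j : ℝ) ≠ 0 := by
          have := hout j; positivity
        rw [mul_div_cancel₀ _ h1]

/-- Geometric ℓ¹ convergence of the Jacobi (power) iteration to the fixed point. -/
theorem jacobi_geometric_convergence {n : ℕ}
    (E : Fin n → Fin n → Prop) [DecidableRel E]
    (d : ℝ) (hd0 : 0 ≤ d) (hd1 : d < 1) (hout : ∀ j, 1 ≤ outdeg E j)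
    (xstar : Fin n → ℝ) (hstar0 : ∀ i, 0 ≤ xstar i) (hstar1 : ∑ i, xstar i = 1)
    (hfix : Fpr E d xstar = xstar)
    (x : ℕ → Fin n → ℝ) (hx00 : ∀ i, 0 ≤ x 0 i) (hx01 : ∑ i, x 0 i = 1)
    (hrec : ∀ k, x (k + 1) = Fpr E d (x k)) :
    (∀ k, ∑ i, |x k i - xstar i| ≤ d ^ k * ∑ i, |x 0 i - xstar i|) ∧
      Tendsto (fun k => x k) atTop (nhds xstar) := by
  have hbound : ∀ k, ∑ i, |x k i - xstar i| ≤ d ^ k * ∑ i, |x 0 i - xstar i| := by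
    intro k
    induction k with
    | zero => simp
    | succ k ih =>
      calc ∑ i, |x (k + 1) i - xstar i|
          = ∑ i, |Fpr E d (x k) i - Fpr E d xstar i| := by rw [hrec k, hfix]
        _ ≤ d * ∑ j, |x k j - xstar j| := fpr_contract E d hd0 hout _ _
        _ ≤ d * (d ^ k * ∑ i, |x 0 i - xstar i|) := by gcongr
        _ = d ^ (k + 1) * ∑ i, |x 0 i - xstar i| := by ring
  refine ⟨hbound, ?_⟩
  rw [tendsto_pi_nhds]
  intro i
  have h0 : Tendsto (fun k => x k i - xstar i) atTop (nhds 0) := by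
    refine squeeze_zero_norm (a := fun k => d ^ k * ∑ j, |x 0 j - xstar j|) (fun k => ?_) ?_
    · rw [Real.norm_eq_abs]
      refine le_trans ?_ (hbound k)
      exact Finset.single_le_sum (f := fun j => |x k j - xstar j|) (fun j _ => abs_nonneg _) (Finset.mem_univ i)
    · rw [← mul_zero (∑ j, |x 0 j - xstar j|)]
      simpa [mul_comm] using
        (tendsto_pow_atTop_nhds_zero_of_lt_one hd0 hd1).const_mul (∑ j, |x 0 j - xstar j|)
  have := h0.add_const (xstar i)
  simpa using this
end
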